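/- arXiv:2410.20414 — 7 statements merged into one kernel-verified Lean document; each statement's English description precedes it below -/
import Mathlib

section
/- Let V be a real vector space and α : V → V a linear map with α ∘ α = −id. Then for all linear maps A, B, C : V → V, the Hom-Jacobi identity holds: [[A,B]_α, Ad_α(C)]_α + [[B,C]_α, Ad_α(A)]_α + [[C,A]_α, Ad_α(B)]_α = 0, where Ad_α(B) = α ∘ B ∘ α and [A,B]_α = α∘A∘α∘B∘α − α∘B∘α∘A∘α. Consequently (gl(V), [·,·]_α, Ad_α) is a skew-Hom-Lie algebra. -/
/-- Ad_α(B) = α ∘ B ∘ α on gl(V). -/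
def AdTwist {V : Type*} [AddCommGroup V] [Module ℝ V]
    (α B : Module.End ℝ V) : Module.End ℝ V := α * B * α

/-- The twisted bracket [A,B]_α = α∘A∘α∘B∘α − α∘B∘α∘A∘α on gl(V). -/
def twistBracket {V : Type*} [AddCommGroup V] [Module ℝ V]
    (α A B : Module.End ℝ V) : Module.End ℝ V :=
  α * A * α * B * α - α * B * α * A * α

/-- If α² = −id then the Hom-Jacobi identity
[[A,B]_α, Ad_α C]_α + [[B,C]_α, Ad_α A]_α + [[C,A]_α, Ad_α B]_α = 0 holds. -/
theorem twistBracket_homJacobi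
    {V : Type*} [AddCommGroup V] [Module ℝ V]
    (α : Module.End ℝ V) (hα : α * α = -1)
    (A B C : Module.End ℝ V) :
    twistBracket α (twistBracket α A B) (AdTwist α C)
      + twistBracket α (twistBracket α B C) (AdTwist α A)
      + twistBracket α (twistBracket α C A) (AdTwist α B) = 0 := by
  have h : ∀ x : Module.End ℝ V, α * (α * x) = -x := fun x => by
    rw [← mul_assoc, hα, neg_one_mul]
  simp only [twistBracket, AdTwist, mul_sub, sub_mul, add_mul, smul_mul_assoc, mul_assoc, h,
    hα, mul_neg_one, mul_neg, neg_mul, neg_neg, neg_sub, sub_neg_eq_add, neg_smul, one_smul, one_mul, mul_one]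
  abel
end

section
/- Let (𝔤, [·,·], β) be a skew-Hom-Lie algebra, V a real vector space, and α : V → V a linear map with α ∘ α = −id. If ρ : 𝔤 → gl(V) is a linear map satisfying ρ(β(x)) ∘ α = −α ∘ ρ(x) and ρ([x,y]) ∘ α = ρ(β(x)) ∘ ρ(y) − ρ(β(y)) ∘ ρ(x) for all x, y ∈ 𝔤 (i.e., ρ is a representation with respect to α), then ρ ∘ β = Ad_α ∘ ρ and ρ([x,y]) = −[ρ(x), ρ(y)]_α for all x, y ∈ 𝔤, where Ad_α(B) = α ∘ B ∘ α and [A,B]_α = α∘A∘α∘B∘α − α∘B∘α∘A∘α. -/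
/-- a representation of a skew-Hom-Lie algebra (𝔤,[·,·],β) on V with
respect to α (with α² = −id) is a morphism of skew-Hom-Lie algebras into
(gl(V), [·,·]_α, Ad_α). -/
theorem representation_is_morphism
    {𝔤 V : Type*} [AddCommGroup 𝔤] [Module ℝ 𝔤] [AddCommGroup V] [Module ℝ V]
    (b : 𝔤 →ₗ[ℝ] 𝔤 →ₗ[ℝ] 𝔤) (hskew : ∀ x y : 𝔤, b x y = - b y x)
    (β : 𝔤 →ₗ[ℝ] 𝔤)
    (hβ : ∀ x y : 𝔤, β (b x y) = - b (β x) (β y))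
    (hjac : ∀ x y z : 𝔤, b (b y z) (β x) + b (b z x) (β y) + b (b x y) (β z) = 0)
    (α : Module.End ℝ V) (hα : α * α = -1)
    (ρ : 𝔤 →ₗ[ℝ] Module.End ℝ V)
    (hrep1 : ∀ x : 𝔤, ρ (β x) * α = -(α * ρ x))
    (hrep2 : ∀ x y : 𝔤, ρ (b x y) * α = ρ (β x) * ρ y - ρ (β y) * ρ x) :
    (∀ x : 𝔤, ρ (β x) = AdTwist α (ρ x)) ∧
    (∀ x y : 𝔤, ρ (b x y) = - twistBracket α (ρ x) (ρ y)) := by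
  have h1 : ∀ x : 𝔤, ρ (β x) = AdTwist α (ρ x) := by
    intro x
    have := congrArg (· * α) (hrep1 x)
    simp only [mul_assoc, hα] at this
    have : ρ (β x) * (-1) = -(α * (ρ x * α)) := this
    simpa [AdTwist, mul_assoc] using (neg_injective (by simpa using this))
  refine ⟨h1, fun x y => ?_⟩
  have := congrArg (· * α) (hrep2 x y)
  simp only [mul_assoc, hα] at this
  have h2 : ρ (b x y) * (-1) = ρ (β x) * (ρ y * α) - ρ (β y) * (ρ x * α) := this
  rw [h1 x, h1 y] at h2
  have : -ρ (b x y) = AdTwist α (ρ x) * (ρ y * α) - AdTwist α (ρ y) * (ρ x * α) := by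
    simpa using h2
  rw [neg_eq_iff_eq_neg] at this
  rw [this]
  simp [AdTwist, twistBracket, mul_assoc, neg_sub]
end

section
/- Let (𝔤, [·,·], β) be a skew-Hom-Lie algebra, V a real vector space, and α : V → V a linear map with α ∘ α = −id. If ρ : 𝔤 → gl(V) is a linear map satisfying ρ ∘ β = Ad_α ∘ ρ and ρ([x,y]) = −[ρ(x), ρ(y)]_α for all x, y ∈ 𝔤 (i.e., ρ is a morphism of skew-Hom-Lie algebras into (gl(V), [·,·]_α, Ad_α)), then ρ(β(x)) ∘ α = −α ∘ ρ(x) and ρ([x,y]) ∘ α = ρ(β(x)) ∘ ρ(y) − ρ(β(y)) ∘ ρ(x) for all x, y ∈ 𝔤; that is, ρ is a representation of (𝔤, [·,·], β) on V with respect to α. -/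
/-- a morphism ρ of skew-Hom-Lie algebras from (𝔤,[·,·],β) to
(gl(V), [·,·]_α, Ad_α) (with α² = −id) is a representation of (𝔤,[·,·],β) on V
with respect to α. -/
theorem morphism_is_representation
    {𝔤 V : Type*} [AddCommGroup 𝔤] [Module ℝ 𝔤] [AddCommGroup V] [Module ℝ V]
    (b : 𝔤 →ₗ[ℝ] 𝔤 →ₗ[ℝ] 𝔤) (hskew : ∀ x y : 𝔤, b x y = - b y x)
    (β : 𝔤 →ₗ[ℝ] 𝔤)
    (hβ : ∀ x y : 𝔤, β (b x y) = - b (β x) (β y))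
    (hjac : ∀ x y z : 𝔤, b (b y z) (β x) + b (b z x) (β y) + b (b x y) (β z) = 0)
    (α : Module.End ℝ V) (hα : α * α = -1)
    (ρ : 𝔤 →ₗ[ℝ] Module.End ℝ V)
    (hmor1 : ∀ x : 𝔤, ρ (β x) = AdTwist α (ρ x))
    (hmor2 : ∀ x y : 𝔤, ρ (b x y) = - twistBracket α (ρ x) (ρ y)) :
    (∀ x : 𝔤, ρ (β x) * α = -(α * ρ x)) ∧
    (∀ x y : 𝔤, ρ (b x y) * α = ρ (β x) * ρ y - ρ (β y) * ρ x) := by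
  constructor
  · intro x
    rw [hmor1, AdTwist, mul_assoc, mul_assoc, hα]
    noncomm_ring
  · intro x y
    rw [hmor2, hmor1 x, hmor1 y, AdTwist, AdTwist, twistBracket]
    have h : ∀ A B : Module.End ℝ V,
        (α * A * α * B * α) * α = -(α * A * α * B) := by
      intro A B
      rw [mul_assoc, mul_assoc, mul_assoc, mul_assoc, hα]
      noncomm_ring
    rw [neg_mul, sub_mul, h, h]
    noncomm_ring
end

section
/- Fix θ ∈ ℝ. For all x, y ∈ ℝ⁴, [P x, P y]_θ = [x, y]_θ and P([x,y]_θ) = −[P x, P y]_θ, where [x,y]_θ = (P x) ∧ r ∧ y − (P y) ∧ r ∧ x. -/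
/-- The matrix `P(θ)` of Section 4. -/
noncomputable def Pmat (θ : ℝ) : Matrix (Fin 4) (Fin 4) ℝ :=
  !![θ ^ 2, θ * Real.sqrt (1 + θ ^ 2), -(θ * Real.sqrt (1 + θ ^ 2)), -1 - θ ^ 2;
     -(θ * Real.sqrt (1 + θ ^ 2)), -θ ^ 2, 1 + θ ^ 2, θ * Real.sqrt (1 + θ ^ 2);
     θ * Real.sqrt (1 + θ ^ 2), 1 + θ ^ 2, -θ ^ 2, -(θ * Real.sqrt (1 + θ ^ 2));
     -1 - θ ^ 2, -(θ * Real.sqrt (1 + θ ^ 2)), θ * Real.sqrt (1 + θ ^ 2), θ ^ 2]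

/-- The vector `r = (−θ, √(1+θ²), −√(1+θ²), θ)ᵀ`. -/
noncomputable def rvec (θ : ℝ) : Fin 4 → ℝ :=
  ![-θ, Real.sqrt (1 + θ ^ 2), -Real.sqrt (1 + θ ^ 2), θ]

/-- The 3×3 determinant of the rows `u, v, w` restricted to columns `i, j, k`. -/
def minor3 (u v w : Fin 4 → ℝ) (i j k : Fin 4) : ℝ :=
  u i * (v j * w k - v k * w j) - u j * (v i * w k - v k * w i)
    + u k * (v i * w j - v j * w i)

/-- The triple product `u ∧ v ∧ w` on ℝ⁴: the formal expansion along the first row of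
the determinant of the 4×4 matrix with first row `(e₁, −e₂, e₃, e₄)` and remaining
rows `uᵀ, vᵀ, wᵀ`. -/
def triple (u v w : Fin 4 → ℝ) : Fin 4 → ℝ :=
  ![minor3 u v w 1 2 3, minor3 u v w 0 2 3, minor3 u v w 0 1 3, -minor3 u v w 0 1 2]

/-- The bracket `[x,y]_θ = (P x) ∧ r ∧ y − (P y) ∧ r ∧ x` on ℝ⁴. -/
noncomputable def bracketθ (θ : ℝ) (x y : Fin 4 → ℝ) : Fin 4 → ℝ :=
  triple ((Pmat θ).mulVec x) (rvec θ) y - triple ((Pmat θ).mulVec y) (rvec θ) x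

/-- The subset `V* = {x ∈ V₀ : x₁x₂ = x₃x₄}` of the null space `V₀` of the
semi-Euclidean 4-space `ℝ⁴₂` with pseudoscalar product
`⟨x,y⟩ = −x₁y₁ − x₂y₂ + x₃y₃ + x₄y₄`. -/
def Vstar : Set (Fin 4 → ℝ) :=
  {x | -(x 0) ^ 2 - (x 1) ^ 2 + (x 2) ^ 2 + (x 3) ^ 2 = 0 ∧ x 0 * x 1 = x 2 * x 3}

set_option maxHeartbeats 4000000 in
/-- `[P x, P y]_θ = [x,y]_θ` and `P([x,y]_θ) = −[P x, P y]_θ`. -/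
theorem bracketθ_Pmat (θ : ℝ) (x y : Fin 4 → ℝ) :
    bracketθ θ ((Pmat θ).mulVec x) ((Pmat θ).mulVec y) = bracketθ θ x y ∧
    (Pmat θ).mulVec (bracketθ θ x y)
      = -(bracketθ θ ((Pmat θ).mulVec x) ((Pmat θ).mulVec y)) := by
  have h2 : Real.sqrt (1 + θ ^ 2) ^ 2 = 1 + θ ^ 2 := Real.sq_sqrt (by positivity)
  have h3 : Real.sqrt (1 + θ ^ 2) ^ 3 = Real.sqrt (1 + θ ^ 2) * (1 + θ ^ 2) := by
    rw [pow_succ, h2]; ring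
  have h4 : Real.sqrt (1 + θ ^ 2) ^ 4 = (1 + θ ^ 2) ^ 2 := by
    rw [show (4:ℕ) = 2*2 from rfl, pow_mul, h2]
  have h5 : Real.sqrt (1 + θ ^ 2) ^ 5 = Real.sqrt (1 + θ ^ 2) * (1 + θ ^ 2) ^ 2 := by
    rw [pow_succ, h4]; ring
  have h6 : Real.sqrt (1 + θ ^ 2) ^ 6 = (1 + θ ^ 2) ^ 3 := by
    rw [show (6:ℕ) = 2*3 from rfl, pow_mul, h2]
  ring_nf at h2 h3 h4 h5 h6
  constructor <;> funext i <;> fin_cases i <;>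
    simp [bracketθ, triple, minor3, Pmat, rvec, Matrix.mulVec, dotProduct,
      Fin.sum_univ_four] <;>
    ring_nf <;>
    simp only [h6, h5, h4, h3, h2] <;> ring
end

section
/- Fix θ ∈ ℝ. The triple (ℝ⁴, [·,·]_θ, P) is a skew-Hom-Lie algebra: the map (x,y) ↦ [x,y]_θ = (P x) ∧ r ∧ y − (P y) ∧ r ∧ x is bilinear and skew-symmetric, P([x,y]_θ) = −[P x, P y]_θ for all x, y ∈ ℝ⁴, and the Hom-Jacobi identity [[y,z]_θ, P x]_θ + [[z,x]_θ, P y]_θ + [[x,y]_θ, P z]_θ = 0 holds for all x, y, z ∈ ℝ⁴. -/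
set_option maxHeartbeats 1000000 in
lemma Pmv_eq (θ s : ℝ) (hdef : Real.sqrt (1 + θ ^ 2) = s) (x : Fin 4 → ℝ) :
    (Pmat θ).mulVec x = ![-x 3 - θ * s * x 2 + θ * s * x 1 - θ ^ 2 * x 3 + θ ^ 2 * x 0, x 2 + θ * s * x 3 - θ * s * x 0 + θ ^ 2 * x 2 - θ ^ 2 * x 1, x 1 - θ * s * x 3 + θ * s * x 0 - θ ^ 2 * x 2 + θ ^ 2 * x 1, -x 0 + θ * s * x 2 - θ * s * x 1 + θ ^ 2 * x 3 - θ ^ 2 * x 0] := by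
  funext i
  fin_cases i <;>
    simp [Pmat, Matrix.mulVec, dotProduct, Fin.sum_univ_four, hdef] <;> ring

set_option maxHeartbeats 1000000 in
lemma br_eq (θ s : ℝ) (hdef : Real.sqrt (1 + θ ^ 2) = s) (x y : Fin 4 → ℝ) :
    bracketθ θ x y = ![s * x 3 * y 2 + s * x 3 * y 1 - s * x 2 * y 3 + s * x 2 * y 0 - s * x 1 * y 3 + s * x 1 * y 0 - s * x 0 * y 2 - s * x 0 * y 1 + 2 * θ * s ^ 2 * x 2 * y 1 - 2 * θ * s ^ 2 * x 1 * y 2 - 2 * θ ^ 3 * x 2 * y 1 + 2 * θ ^ 3 * x 1 * y 2, θ * x 3 * y 2 - θ * x 3 * y 1 - θ * x 2 * y 3 - θ * x 2 * y 0 + θ * x 1 * y 3 + θ * x 1 * y 0 + θ * x 0 * y 2 - θ * x 0 * y 1 - θ * s ^ 2 * x 3 * y 2 + θ * s ^ 2 * x 3 * y 1 + θ * s ^ 2 * x 2 * y 3 + θ * s ^ 2 * x 2 * y 0 - θ * s ^ 2 * x 1 * y 3 - θ * s ^ 2 * x 1 * y 0 - θ * s ^ 2 * x 0 * y 2 + θ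 * s ^ 2 * x 0 * y 1 + θ ^ 3 * x 3 * y 2 - θ ^ 3 * x 3 * y 1 - θ ^ 3 * x 2 * y 3 - θ ^ 3 * x 2 * y 0 + θ ^ 3 * x 1 * y 3 + θ ^ 3 * x 1 * y 0 + θ ^ 3 * x 0 * y 2 - θ ^ 3 * x 0 * y 1, -θ * x 3 * y 2 + θ * x 3 * y 1 + θ * x 2 * y 3 + θ * x 2 * y 0 - θ * x 1 * y 3 - θ * x 1 * y 0 - θ * x 0 * y 2 + θ * x 0 * y 1 + θ * s ^ 2 * x 3 * y 2 - θ * s ^ 2 * x 3 * y 1 - θ * s ^ 2 * x 2 * y 3 - θ * s ^ 2 * x 2 * y 0 + θ * s ^ 2 * x 1 * y 3 + θ * s ^ 2 * x 1 * y 0 + θ * s ^ 2 * x 0 * y 2 - θ * s ^ 2 * x 0 * y 1 - θ ^ 3 * x 3 * y 2 + θ ^ 3 * x 3 * y 1 + θ ^ 3 * x 2 * y 3 + θ ^ 3 * x 2 * y 0 - θ ^ 3 * x 1 * y 3 - θ ^ 3 * x 1 * y 0 - θ ^ 3 * x 0 * y 2 + θ ^ 3 * x 0 * y 1, s * x 3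 * y 2 + s * x 3 * y 1 - s * x 2 * y 3 + s * x 2 * y 0 - s * x 1 * y 3 + s * x 1 * y 0 - s * x 0 * y 2 - s * x 0 * y 1 + 2 * θ * s ^ 2 * x 2 * y 1 - 2 * θ * s ^ 2 * x 1 * y 2 - 2 * θ ^ 3 * x 2 * y 1 + 2 * θ ^ 3 * x 1 * y 2] := by
  funext i
  fin_cases i <;>
    simp [bracketθ, triple, minor3, Pmat, rvec, Matrix.mulVec, dotProduct,
      Fin.sum_univ_four, hdef] <;> ring

set_option maxHeartbeats 1000000 in
lemma br_addl (θ s : ℝ) (hdef : Real.sqrt (1 + θ ^ 2) = s) (x x' y : Fin 4 → ℝ) :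
    bracketθ θ (x + x') y = bracketθ θ x y + bracketθ θ x' y := by
  simp only [br_eq θ s hdef]
  funext i
  fin_cases i <;> simp <;> ring

set_option maxHeartbeats 1000000 in
lemma br_smull (θ s : ℝ) (hdef : Real.sqrt (1 + θ ^ 2) = s) (c : ℝ) (x y : Fin 4 → ℝ) :
    bracketθ θ (c • x) y = c • bracketθ θ x y := by
  simp only [br_eq θ s hdef]
  funext i
  fin_cases i <;> simp <;> ring

set_option maxHeartbeats 1000000 in
lemma br_addr (θ s : ℝ) (hdef : Real.sqrt (1 + θ ^ 2) = s) (x y y' : Fin 4 → ℝ) :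
    bracketθ θ x (y + y') = bracketθ θ x y + bracketθ θ x y' := by
  simp only [br_eq θ s hdef]
  funext i
  fin_cases i <;> simp <;> ring

set_option maxHeartbeats 1000000 in
lemma br_smulr (θ s : ℝ) (hdef : Real.sqrt (1 + θ ^ 2) = s) (c : ℝ) (x y : Fin 4 → ℝ) :
    bracketθ θ x (c • y) = c • bracketθ θ x y := by
  simp only [br_eq θ s hdef]
  funext i
  fin_cases i <;> simp <;> ring

set_option maxHeartbeats 1000000 in
lemma br_skew (θ s : ℝ) (hdef : Real.sqrt (1 + θ ^ 2) = s) (x y : Fin 4 → ℝ) :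
    bracketθ θ x y = -(bracketθ θ y x) := by
  simp only [br_eq θ s hdef]
  funext i
  fin_cases i <;> simp <;> ring

set_option maxHeartbeats 2000000 in
lemma br_Pcompat (θ s : ℝ) (hs : s ^ 2 = 1 + θ ^ 2) (hdef : Real.sqrt (1 + θ ^ 2) = s)
    (x y : Fin 4 → ℝ) :
    (Pmat θ).mulVec (bracketθ θ x y)
      = -(bracketθ θ ((Pmat θ).mulVec x) ((Pmat θ).mulVec y)) := by
  rw [br_eq θ s hdef x y, Pmv_eq θ s hdef x, Pmv_eq θ s hdef y,
    br_eq θ s hdef, Pmv_eq θ s hdef]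
  funext i
  fin_cases i
  · simp
    linear_combination (-4 * θ ^ 2 * s * x 3 * y 2 + 4 * θ ^ 2 * s * x 2 * y 3 - 4 * θ ^ 2 * s * x 1 * y 0 + 4 * θ ^ 2 * s * x 0 * y 1 - 4 * θ ^ 3 * x 2 * y 1 + 4 * θ ^ 3 * x 1 * y 2) * hs
  · simp
    linear_combination (4 * θ ^ 2 * s * x 3 * y 0 - 4 * θ ^ 2 * s * x 0 * y 3) * hs
  · simp
    linear_combination (-4 * θ ^ 2 * s * x 3 * y 0 + 4 * θ ^ 2 * s * x 0 * y 3) * hs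
  · simp
    linear_combination (-4 * θ ^ 2 * s * x 3 * y 1 - 4 * θ ^ 2 * s * x 2 * y 0 + 4 * θ ^ 2 * s * x 1 * y 3 + 4 * θ ^ 2 * s * x 0 * y 2 - 4 * θ ^ 3 * x 2 * y 1 + 4 * θ ^ 3 * x 1 * y 2) * hs

set_option maxHeartbeats 4000000 in
lemma br_jacobi (θ s : ℝ) (hs : s ^ 2 = 1 + θ ^ 2) (hdef : Real.sqrt (1 + θ ^ 2) = s)
    (x y z : Fin 4 → ℝ) :
    bracketθ θ (bracketθ θ y z) ((Pmat θ).mulVec x)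
      + bracketθ θ (bracketθ θ z x) ((Pmat θ).mulVec y)
      + bracketθ θ (bracketθ θ x y) ((Pmat θ).mulVec z) = 0 := by
  rw [br_eq θ s hdef y z, br_eq θ s hdef z x, br_eq θ s hdef x y,
    Pmv_eq θ s hdef x, Pmv_eq θ s hdef y, Pmv_eq θ s hdef z,
    br_eq θ s hdef, br_eq θ s hdef, br_eq θ s hdef]
  funext i
  fin_cases i
  · simp
    linear_combination (4 * θ ^ 2 * s ^ 2 * x 3 * y 2 * z 1 - 4 * θ ^ 2 * s ^ 2 * x 3 * y 1 * z 2 - 4 * θ ^ 2 * s ^ 2 * x 2 * y 3 * z 1 + 4 * θ ^ 2 * s ^ 2 * x 2 * y 1 * z 3 + 4 * θ ^ 2 * s ^ 2 * x 2 * y 1 * z 0 - 4 * θ ^ 2 * s ^ 2 * x 2 * y 0 * z 1 + 4 * θ ^ 2 * s ^ 2 * x 1 * y 3 * z 2 - 4 * θ ^ 2 * s ^ 2 * x 1 * y 2 * z 3 - 4 * θ ^ 2 * s ^ 2 * x 1 * y 2 * z 0 + 4 * θ ^ 2 * s ^ 2 * x 1 * y 0 * z 2 + 4 * θ ^ 2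 * s ^ 2 * x 0 * y 2 * z 1 - 4 * θ ^ 2 * s ^ 2 * x 0 * y 1 * z 2 - 4 * θ ^ 4 * x 3 * y 2 * z 1 + 4 * θ ^ 4 * x 3 * y 1 * z 2 + 4 * θ ^ 4 * x 2 * y 3 * z 1 - 4 * θ ^ 4 * x 2 * y 1 * z 3 - 4 * θ ^ 4 * x 2 * y 1 * z 0 + 4 * θ ^ 4 * x 2 * y 0 * z 1 - 4 * θ ^ 4 * x 1 * y 3 * z 2 + 4 * θ ^ 4 * x 1 * y 2 * z 3 + 4 * θ ^ 4 * x 1 * y 2 * z 0 - 4 * θ ^ 4 * x 1 * y 0 * z 2 - 4 * θ ^ 4 * x 0 * y 2 * z 1 + 4 * θ ^ 4 * x 0 * y 1 * z 2) * hs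
  · simp
    linear_combination (-4 * θ * s * x 3 * y 2 * z 1 + 4 * θ * s * x 3 * y 1 * z 2 + 4 * θ * s * x 2 * y 3 * z 1 - 4 * θ * s * x 2 * y 1 * z 3 + 4 * θ * s * x 2 * y 1 * z 0 - 4 * θ * s * x 2 * y 0 * z 1 - 4 * θ * s * x 1 * y 3 * z 2 + 4 * θ * s * x 1 * y 2 * z 3 - 4 * θ * s * x 1 * y 2 * z 0 + 4 * θ * s * x 1 * y 0 * z 2 + 4 * θ * s * x 0 * y 2 * z 1 - 4 * θ * s * x 0 * y 1 * z 2 - 8 * θ ^ 3 * s * x 3 * y 2 * z 1 + 8 * θ ^ 3 * s * x 3 * y 1 * z 2 + 8 * θ ^ 3 * s * x 2 * y 3 * z 1 - 8 * θ ^ 3 * s * x 2 * y 1 * z 3 + 8 * θ ^ 3 * s * x 2 * y 1 * z 0 - 8 * θ ^ 3 * s * x 2 * y 0 * z 1 - 8 * θ ^ 3 * s * x 1 * y 3 * z 2 + 8 * θ ^ 3 * s * x 1 * y 2 * z 3 - 8 * θ ^ 3 * s * x 1 * y 2 * z 0 + 8 * θ ^ 3 * s * x 1 * y 0 * z 2 +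 8 * θ ^ 3 * s * x 0 * y 2 * z 1 - 8 * θ ^ 3 * s * x 0 * y 1 * z 2 + 8 * θ ^ 3 * s ^ 3 * x 3 * y 2 * z 1 - 8 * θ ^ 3 * s ^ 3 * x 3 * y 1 * z 2 - 8 * θ ^ 3 * s ^ 3 * x 2 * y 3 * z 1 + 8 * θ ^ 3 * s ^ 3 * x 2 * y 1 * z 3 - 8 * θ ^ 3 * s ^ 3 * x 2 * y 1 * z 0 + 8 * θ ^ 3 * s ^ 3 * x 2 * y 0 * z 1 + 8 * θ ^ 3 * s ^ 3 * x 1 * y 3 * z 2 - 8 * θ ^ 3 * s ^ 3 * x 1 * y 2 * z 3 + 8 * θ ^ 3 * s ^ 3 * x 1 * y 2 * z 0 - 8 * θ ^ 3 * s ^ 3 * x 1 * y 0 * z 2 - 8 * θ ^ 3 * s ^ 3 * x 0 * y 2 * z 1 + 8 * θ ^ 3 * s ^ 3 * x 0 * y 1 * z 2 - 8 * θ ^ 5 * s * x 3 * y 2 * z 1 + 8 * θ ^ 5 * s * x 3 * y 1 * z 2 + 8 * θ ^ 5 * s * x 2 * y 3 * z 1 - 8 * θ ^ 5 * s * x 2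 * y 1 * z 3 + 8 * θ ^ 5 * s * x 2 * y 1 * z 0 - 8 * θ ^ 5 * s * x 2 * y 0 * z 1 - 8 * θ ^ 5 * s * x 1 * y 3 * z 2 + 8 * θ ^ 5 * s * x 1 * y 2 * z 3 - 8 * θ ^ 5 * s * x 1 * y 2 * z 0 + 8 * θ ^ 5 * s * x 1 * y 0 * z 2 + 8 * θ ^ 5 * s * x 0 * y 2 * z 1 - 8 * θ ^ 5 * s * x 0 * y 1 * z 2) * hs
  · simp
    linear_combination (4 * θ * s * x 3 * y 2 * z 1 - 4 * θ * s * x 3 * y 1 * z 2 - 4 * θ * s * x 2 * y 3 * z 1 + 4 * θ * s * x 2 * y 1 * z 3 - 4 * θ * s * x 2 * y 1 * z 0 + 4 * θ * s * x 2 * y 0 * z 1 + 4 * θ * s * x 1 * y 3 * z 2 - 4 * θ * s * x 1 * y 2 * z 3 + 4 * θ * s * x 1 * y 2 * z 0 - 4 * θ * s * x 1 * y 0 * z 2 - 4 * θ * s * x 0 * y 2 * z 1 + 4 * θ * s * x 0 * y 1 * z 2 + 8 * θ ^ 3 * s * x 3 * y 2 * z 1 - 8 * θ ^ 3 * s * x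 3 * y 1 * z 2 - 8 * θ ^ 3 * s * x 2 * y 3 * z 1 + 8 * θ ^ 3 * s * x 2 * y 1 * z 3 - 8 * θ ^ 3 * s * x 2 * y 1 * z 0 + 8 * θ ^ 3 * s * x 2 * y 0 * z 1 + 8 * θ ^ 3 * s * x 1 * y 3 * z 2 - 8 * θ ^ 3 * s * x 1 * y 2 * z 3 + 8 * θ ^ 3 * s * x 1 * y 2 * z 0 - 8 * θ ^ 3 * s * x 1 * y 0 * z 2 - 8 * θ ^ 3 * s * x 0 * y 2 * z 1 + 8 * θ ^ 3 * s * x 0 * y 1 * z 2 - 8 * θ ^ 3 * s ^ 3 * x 3 * y 2 * z 1 + 8 * θ ^ 3 * s ^ 3 * x 3 * y 1 * z 2 + 8 * θ ^ 3 * s ^ 3 * x 2 * y 3 * z 1 - 8 * θ ^ 3 * s ^ 3 * x 2 * y 1 * z 3 + 8 * θ ^ 3 * s ^ 3 * x 2 * y 1 * z 0 - 8 * θ ^ 3 * s ^ 3 * x 2 * y 0 * z 1 - 8 * θ ^ 3 * s ^ 3 * x 1 * y 3 * z 2 + 8 * θ ^ 3 * s ^ 3 * x 1 * y 2 * z 3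 - 8 * θ ^ 3 * s ^ 3 * x 1 * y 2 * z 0 + 8 * θ ^ 3 * s ^ 3 * x 1 * y 0 * z 2 + 8 * θ ^ 3 * s ^ 3 * x 0 * y 2 * z 1 - 8 * θ ^ 3 * s ^ 3 * x 0 * y 1 * z 2 + 8 * θ ^ 5 * s * x 3 * y 2 * z 1 - 8 * θ ^ 5 * s * x 3 * y 1 * z 2 - 8 * θ ^ 5 * s * x 2 * y 3 * z 1 + 8 * θ ^ 5 * s * x 2 * y 1 * z 3 - 8 * θ ^ 5 * s * x 2 * y 1 * z 0 + 8 * θ ^ 5 * s * x 2 * y 0 * z 1 + 8 * θ ^ 5 * s * x 1 * y 3 * z 2 - 8 * θ ^ 5 * s * x 1 * y 2 * z 3 + 8 * θ ^ 5 * s * x 1 * y 2 * z 0 - 8 * θ ^ 5 * s * x 1 * y 0 * z 2 - 8 * θ ^ 5 * s * x 0 * y 2 * z 1 + 8 * θ ^ 5 * s * x 0 * y 1 * z 2) * hs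
  · simp
    linear_combination (4 * θ ^ 2 * s ^ 2 * x 3 * y 2 * z 1 - 4 * θ ^ 2 * s ^ 2 * x 3 * y 1 * z 2 - 4 * θ ^ 2 * s ^ 2 * x 2 * y 3 * z 1 + 4 * θ ^ 2 * s ^ 2 * x 2 * y 1 * z 3 + 4 * θ ^ 2 * s ^ 2 * x 2 * y 1 * z 0 - 4 * θ ^ 2 * s ^ 2 * x 2 * y 0 * z 1 + 4 * θ ^ 2 * s ^ 2 * x 1 * y 3 * z 2 - 4 * θ ^ 2 * s ^ 2 * x 1 * y 2 * z 3 - 4 * θ ^ 2 * s ^ 2 * x 1 * y 2 * z 0 + 4 * θ ^ 2 * s ^ 2 * x 1 * y 0 * z 2 + 4 * θ ^ 2 * s ^ 2 * x 0 * y 2 * z 1 - 4 * θ ^ 2 * s ^ 2 * x 0 * y 1 * z 2 - 4 * θ ^ 4 * x 3 * y 2 * z 1 + 4 * θ ^ 4 * x 3 * y 1 * z 2 + 4 * θ ^ 4 * x 2 * y 3 * z 1 - 4 * θ ^ 4 * x 2 * y 1 * z 3 - 4 * θ ^ 4 * x 2 * y 1 * z 0 + 4 * θ ^ 4 * x 2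 * y 0 * z 1 - 4 * θ ^ 4 * x 1 * y 3 * z 2 + 4 * θ ^ 4 * x 1 * y 2 * z 3 + 4 * θ ^ 4 * x 1 * y 2 * z 0 - 4 * θ ^ 4 * x 1 * y 0 * z 2 - 4 * θ ^ 4 * x 0 * y 2 * z 1 + 4 * θ ^ 4 * x 0 * y 1 * z 2) * hs

/-- `(ℝ⁴, [·,·]_θ, P)` is a skew-Hom-Lie algebra: the bracket is
bilinear and skew-symmetric, `P([x,y]_θ) = −[P x, P y]_θ`, and the Hom-Jacobi
identity holds. -/
theorem bracketθ_Pmat_skewHomLie (θ : ℝ) :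
    (∀ x x' y : Fin 4 → ℝ, bracketθ θ (x + x') y = bracketθ θ x y + bracketθ θ x' y) ∧
    (∀ (c : ℝ) (x y : Fin 4 → ℝ), bracketθ θ (c • x) y = c • bracketθ θ x y) ∧
    (∀ x y y' : Fin 4 → ℝ, bracketθ θ x (y + y') = bracketθ θ x y + bracketθ θ x y') ∧
    (∀ (c : ℝ) (x y : Fin 4 → ℝ), bracketθ θ x (c • y) = c • bracketθ θ x y) ∧
    (∀ x y : Fin 4 → ℝ, bracketθ θ x y = -(bracketθ θ y x)) ∧
    (∀ x y : Fin 4 → ℝ,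
      (Pmat θ).mulVec (bracketθ θ x y)
        = -(bracketθ θ ((Pmat θ).mulVec x) ((Pmat θ).mulVec y))) ∧
    (∀ x y z : Fin 4 → ℝ,
      bracketθ θ (bracketθ θ y z) ((Pmat θ).mulVec x)
        + bracketθ θ (bracketθ θ z x) ((Pmat θ).mulVec y)
        + bracketθ θ (bracketθ θ x y) ((Pmat θ).mulVec z) = 0) := by
  obtain ⟨s, hs, hdef⟩ : ∃ s : ℝ, s ^ 2 = 1 + θ ^ 2 ∧ Real.sqrt (1 + θ ^ 2) = s :=
    ⟨_, Real.sq_sqrt (by positivity), rfl⟩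
  exact ⟨br_addl θ s hdef, br_smull θ s hdef, br_addr θ s hdef, br_smulr θ s hdef,
    br_skew θ s hdef, br_Pcompat θ s hs hdef, br_jacobi θ s hs hdef⟩
end

section
/- Fix θ ∈ ℝ. For all x, y ∈ ℝ⁴, the bracket [x,y]_θ = (P x) ∧ r ∧ y − (P y) ∧ r ∧ x lies in V* = {z = (z₁,z₂,z₃,z₄)ᵀ ∈ ℝ⁴ : −z₁² − z₂² + z₃² + z₄² = 0 and z₁z₂ = z₃z₄}. -/
/-- `[x,y]_θ ∈ V*` for all `x, y ∈ ℝ⁴`. -/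
theorem bracketθ_mem_Vstar (θ : ℝ) (x y : Fin 4 → ℝ) :
    bracketθ θ x y ∈ Vstar := by
  have hs : Real.sqrt (1 + θ ^ 2) ^ 2 = 1 + θ ^ 2 :=
    Real.sq_sqrt (by positivity)
  set s := Real.sqrt (1 + θ ^ 2) with hsdef
  constructor
  · simp only [bracketθ, Pmat, rvec, triple, minor3, Matrix.mulVec, dotProduct,
      Fin.sum_univ_four, Matrix.cons_val', Matrix.cons_val_zero, Matrix.cons_val_one,
      Matrix.head_cons, Matrix.head_fin_const, Matrix.empty_val', Matrix.cons_val_fin_one,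
      Matrix.cons_val_two, Matrix.cons_val_three, Matrix.tail_cons, Matrix.of_apply,
      Pi.sub_apply]
    ring
  · simp only [bracketθ, Pmat, rvec, triple, minor3, Matrix.mulVec, dotProduct,
      Fin.sum_univ_four, Matrix.cons_val', Matrix.cons_val_zero, Matrix.cons_val_one,
      Matrix.head_cons, Matrix.head_fin_const, Matrix.empty_val', Matrix.cons_val_fin_one,
      Matrix.cons_val_two, Matrix.cons_val_three, Matrix.tail_cons, Matrix.of_apply,
      Pi.sub_apply]
    linear_combination (- 2 * θ * s * x 3 ^ 2 * y 2 ^ 2 + 2 * θ * s * x 3 ^ 2 * y 1 ^ 2 + 4 * θ * s * x 2 * x 3 * y 2 * y 3 + 4 * θ * s * x 2 * x 3 * y 0 * y 1 - 2 * θ * s * x 2 ^ 2 * y 3 ^ 2 + 2 * θ * s * x 2 ^ 2 * y 0 ^ 2 - 4 * θ * s * x 1 * x 3 * y 1 * y 3 - 4 * θ * s * x 1 * x 3 * y 0 * y 2 + 2 * θ * s * x 1 ^ 2 * y 3 ^ 2 - 2 * θ * s * x 1 ^ 2 * y 0 ^ 2 - 4 * θ * s * x 0 * x 2 * y 1 *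 y 3 - 4 * θ * s * x 0 * x 2 * y 0 * y 2 + 4 * θ * s * x 0 * x 1 * y 2 * y 3 + 4 * θ * s * x 0 * x 1 * y 0 * y 1 + 2 * θ * s * x 0 ^ 2 * y 2 ^ 2 - 2 * θ * s * x 0 ^ 2 * y 1 ^ 2 - 4 * θ ^ 2 * s ^ 2 * x 2 * x 3 * y 1 * y 2 + 4 * θ ^ 2 * s ^ 2 * x 2 * x 3 * y 1 ^ 2 + 4 * θ ^ 2 * s ^ 2 * x 2 ^ 2 * y 1 * y 3 + 4 * θ ^ 2 * s ^ 2 * x 2 ^ 2 * y 0 * y 1 + 4 * θ ^ 2 * s ^ 2 * x 1 * x 3 * y 2 ^ 2 - 4 * θ ^ 2 * s ^ 2 * x 1 * x 3 * y 1 * y 2 - 4 * θ ^ 2 * s ^ 2 * x 1 * x 2 * y 2 * y 3 - 4 * θ ^ 2 * s ^ 2 * x 1 * x 2 * y 1 * y 3 - 4 * θ ^ 2 * s ^ 2 * x 1 * x 2 * y 0 * y 2 - 4 * θ ^ 2 * s ^ 2 * x 1 * x 2 * y 0 * y 1 + 4 * θ ^ 2 * s ^ 2 * x 1 ^ 2 *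 y 2 * y 3 + 4 * θ ^ 2 * s ^ 2 * x 1 ^ 2 * y 0 * y 2 - 4 * θ ^ 2 * s ^ 2 * x 0 * x 2 * y 1 * y 2 + 4 * θ ^ 2 * s ^ 2 * x 0 * x 2 * y 1 ^ 2 + 4 * θ ^ 2 * s ^ 2 * x 0 * x 1 * y 2 ^ 2 - 4 * θ ^ 2 * s ^ 2 * x 0 * x 1 * y 1 * y 2 + 4 * θ ^ 4 * x 2 * x 3 * y 1 * y 2 - 4 * θ ^ 4 * x 2 * x 3 * y 1 ^ 2 - 4 * θ ^ 4 * x 2 ^ 2 * y 1 * y 3 - 4 * θ ^ 4 * x 2 ^ 2 * y 0 * y 1 - 4 * θ ^ 4 * x 1 * x 3 * y 2 ^ 2 + 4 * θ ^ 4 * x 1 * x 3 * y 1 * y 2 + 4 * θ ^ 4 * x 1 * x 2 * y 2 * y 3 + 4 * θ ^ 4 * x 1 * x 2 * y 1 * y 3 + 4 * θ ^ 4 * x 1 * x 2 * y 0 * y 2 + 4 * θ ^ 4 * x 1 * x 2 * y 0 * y 1 - 4 * θ ^ 4 * x 1 ^ 2 * y 2 * y 3 - 4 * θ ^ 4 *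 x 1 ^ 2 * y 0 * y 2 + 4 * θ ^ 4 * x 0 * x 2 * y 1 * y 2 - 4 * θ ^ 4 * x 0 * x 2 * y 1 ^ 2 - 4 * θ ^ 4 * x 0 * x 1 * y 2 ^ 2 + 4 * θ ^ 4 * x 0 * x 1 * y 1 * y 2) * hs
end

section
/- Fix θ ∈ ℝ. For every z = (z₁,z₂,z₃,z₄)ᵀ ∈ ℝ⁴ satisfying −z₁² − z₂² + z₃² + z₄² = 0 and z₁z₂ = z₃z₄ (i.e., z ∈ V*), the vector P z also satisfies these two equations, i.e., P z ∈ V*. -/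
/-- `V*` is invariant under `P`: if `z ∈ V*` then `P z ∈ V*`. -/
theorem Pmat_mulVec_mem_Vstar (θ : ℝ) (z : Fin 4 → ℝ)
    (hz : z ∈ Vstar) : (Pmat θ).mulVec z ∈ Vstar := by
  obtain ⟨h1, h2⟩ := hz
  have key : ∀ i, (Pmat θ).mulVec z i =
      ![θ ^ 2 * z 0 + θ * Real.sqrt (1 + θ ^ 2) * z 1 - θ * Real.sqrt (1 + θ ^ 2) * z 2
          + (-1 - θ ^ 2) * z 3,
        -(θ * Real.sqrt (1 + θ ^ 2)) * z 0 - θ ^ 2 * z 1 + (1 + θ ^ 2) * z 2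
          + θ * Real.sqrt (1 + θ ^ 2) * z 3,
        θ * Real.sqrt (1 + θ ^ 2) * z 0 + (1 + θ ^ 2) * z 1 - θ ^ 2 * z 2
          - θ * Real.sqrt (1 + θ ^ 2) * z 3,
        (-1 - θ ^ 2) * z 0 - θ * Real.sqrt (1 + θ ^ 2) * z 1 + θ * Real.sqrt (1 + θ ^ 2) * z 2
          + θ ^ 2 * z 3] i := by
    intro i
    fin_cases i <;>
      simp [Pmat, Matrix.mulVec, dotProduct, Fin.sum_univ_four] <;> ring
  constructor
  · simp only [key]
    simp only [Matrix.cons_val_zero, Matrix.cons_val_one, Matrix.head_cons,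
      Matrix.cons_val_two, Matrix.tail_cons, Matrix.cons_val_three]
    linear_combination (-1 - 2 * θ ^ 2) * h1 + (4 * θ * Real.sqrt (1 + θ ^ 2)) * h2
  · simp only [key]
    simp only [Matrix.cons_val_zero, Matrix.cons_val_one, Matrix.head_cons,
      Matrix.cons_val_two, Matrix.tail_cons, Matrix.cons_val_three]
    linear_combination (-(θ * Real.sqrt (1 + θ ^ 2))) * h1 + (1 + 2 * θ ^ 2) * h2
end
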